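/- Let C̄ : (−1/2, 1/2) → (self-adjoint linear maps Sym₂ → Sym₂) be measurable and essentially bounded, with C̄(t)Ā·Ā ≥ c|Ā|² for a.e. t and all Ā ∈ Sym₂, where c > 0. Define C̄⁽ⁱ⁾ := ∫_{−1/2}^{1/2} tⁱ C̄(t) dt for i = 0, 1, 2 (C̄⁽⁰⁾ is positive definite, hence invertible), and Ĉ := 12( C̄⁽²⁾ − C̄⁽¹⁾(C̄⁽⁰⁾)⁻¹C̄⁽¹⁾ ). Then for every Ā ∈ Sym₂, ĈĀ·Ā = 12 · min over B̄ ∈ Sym₂ of ∫_{−1/2}^{1/2} C̄(t)(B̄ + tĀ)·(B̄ + tĀ) dt. -/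

import Mathlib

/-!
Writing `Q₀(B) = C̄⁽⁰⁾B·B`, the self-adjointness of `C̄(t)` turns the integral into the
quadratic function `Q₀(B) + 2 C̄⁽¹⁾Ā·B + C̄⁽²⁾Ā·Ā` of `B`. Since `C̄⁽⁰⁾` is positive
semidefinite, completing the square around `B* = −(C̄⁽⁰⁾)⁻¹C̄⁽¹⁾Ā` shows that the minimum is
attained at `B*` and equals `C̄⁽²⁾Ā·Ā − C̄⁽¹⁾Ā·(C̄⁽⁰⁾)⁻¹C̄⁽¹⁾Ā = ĈĀ·Ā / 12`.
-/

open Matrix MeasureTheory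
open scoped BigOperators

noncomputable section

/-- The space of real 2×2 matrices; symmetric ones form `Sym₂`. -/
abbrev M2 : Type := Matrix (Fin 2) (Fin 2) ℝ

/-- The Frobenius pairing `A·B := tr (A*B)`. -/
def dot2 (A B : M2) : ℝ := (A * B).trace

/-- The interval `(−1/2, 1/2)`. -/
def Ioo2 : Set ℝ := Set.Ioo (-(1:ℝ)/2) (1/2)

lemma dot2_eq_sum (A B : M2) : dot2 A B = ∑ α : Fin 2, ∑ β : Fin 2, A α β * B β α := by
  simp [dot2, Matrix.trace, Matrix.mul_apply]

lemma dot2_comm (A B : M2) : dot2 A B = dot2 B A := Matrix.trace_mul_comm A B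

@[simp] lemma dot2_add_left (A B C : M2) : dot2 (A + B) C = dot2 A C + dot2 B C := by
  simp [dot2, Matrix.add_mul]

@[simp] lemma dot2_add_right (A B C : M2) : dot2 A (B + C) = dot2 A B + dot2 A C := by
  simp [dot2, Matrix.mul_add]

@[simp] lemma dot2_smul_left (r : ℝ) (A B : M2) : dot2 (r • A) B = r * dot2 A B := by
  simp [dot2]

@[simp] lemma dot2_smul_right (r : ℝ) (A B : M2) : dot2 A (r • B) = r * dot2 A B := by
  simp [dot2]

@[simp] lemma dot2_neg_left (A B : M2) : dot2 (-A) B = -dot2 A B := by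
  simp [dot2]

@[simp] lemma dot2_neg_right (A B : M2) : dot2 A (-B) = -dot2 A B := by
  simp [dot2]

@[simp] lemma dot2_sub_left (A B C : M2) : dot2 (A - B) C = dot2 A C - dot2 B C := by
  simp [dot2, Matrix.sub_mul]

lemma dot2_self_nonneg {A : M2} (hA : A.IsSymm) : 0 ≤ dot2 A A := by
  rw [dot2_eq_sum]
  refine Finset.sum_nonneg fun α _ => Finset.sum_nonneg fun β _ => ?_
  rw [hA.apply α β]
  exact mul_self_nonneg _

lemma isLeast_quadratic_dot2 {C₀ : M2 →ₗ[ℝ] M2}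
    (hC₀symm : ∀ X Y : M2, X.IsSymm → Y.IsSymm → dot2 (C₀ X) Y = dot2 (C₀ Y) X)
    (hC₀pos : ∀ X : M2, X.IsSymm → 0 ≤ dot2 (C₀ X) X)
    {v w : M2} (hw : w.IsSymm) (hC₀w : C₀ w = v) (k : ℝ) :
    IsLeast {x | ∃ B : M2, B.IsSymm ∧ x = dot2 (C₀ B) B + 2 * dot2 v B + k}
      (k - dot2 v w) := by
  refine ⟨⟨-w, hw.neg, ?_⟩, ?_⟩
  · simp only [map_neg, dot2_neg_left, dot2_neg_right, hC₀w]
    ring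
  · rintro x ⟨B, hB, rfl⟩
    have hsquare : dot2 (C₀ (B + w)) (B + w) = dot2 (C₀ B) B + 2 * dot2 v B + dot2 v w := by
      simp only [map_add, dot2_add_left, dot2_add_right, hC₀symm B w hB hw, hC₀w]
      ring
    linarith [hC₀pos (B + w) (hB.add hw)]

section Moments

variable {μ : Measure ℝ} {Cb : ℝ → M2 →ₗ[ℝ] M2}

lemma integrable_dot2 {f : ℝ → M2} (hf : ∀ α β, Integrable (fun t => f t α β) μ) (Y : M2) :
    Integrable (fun t => dot2 (f t) Y) μ := by
  simp_rw [dot2_eq_sum]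
  exact integrable_finsetSum _ fun α _ => integrable_finsetSum _ fun β _ =>
    (hf α β).mul_const _

lemma integral_dot2 {f : ℝ → M2} (hf : ∀ α β, Integrable (fun t => f t α β) μ) {D : M2}
    (hD : ∀ α β, D α β = ∫ t, f t α β ∂μ) (Y : M2) :
    ∫ t, dot2 (f t) Y ∂μ = dot2 D Y := by
  simp_rw [dot2_eq_sum]
  rw [integral_finsetSum _ fun α _ => integrable_finsetSum _ fun β _ => (hf α β).mul_const _]
  refine Finset.sum_congr rfl fun α _ => ?_
  rw [integral_finsetSum _ fun β _ => (hf α β).mul_const _]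
  exact Finset.sum_congr rfl fun β _ => by rw [integral_mul_const, hD]

lemma integrable_pow_mul_apply [IsFiniteMeasure μ]
    (hmeas : ∀ (A : M2) (α β : Fin 2), Measurable fun t : ℝ => (Cb t A) α β) {K : ℝ}
    (hK : ∀ᵐ t ∂μ, ∀ (A : M2) (α β : Fin 2),
      |(Cb t A) α β| ≤ K * ∑ γ : Fin 2, ∑ δ : Fin 2, |A γ δ|)
    (hμ : ∀ᵐ t ∂μ, |t| ≤ 1) (n : ℕ) (A : M2) (α β : Fin 2) :
    Integrable (fun t => t ^ n * Cb t A α β) μ := by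
  have hentry : Integrable (fun t => Cb t A α β) μ :=
    .of_bound (hmeas A α β).aestronglyMeasurable _ (hK.mono fun t ht => ht A α β)
  refine hentry.bdd_mul (c := 1) (measurable_id.pow_const n).aestronglyMeasurable ?_
  filter_upwards [hμ] with t ht
  simpa [norm_pow] using pow_le_one₀ (abs_nonneg t) ht

/-- `D` is the paper's `C̄⁽ⁿ⁾`. -/
def IsMoment (μ : Measure ℝ) (Cb : ℝ → M2 →ₗ[ℝ] M2) (n : ℕ) (D : M2 →ₗ[ℝ] M2) : Prop :=
  ∀ (A : M2) (α β : Fin 2), D A α β = ∫ t, t ^ n * Cb t A α β ∂μ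

namespace IsMoment

variable {n : ℕ} {D : M2 →ₗ[ℝ] M2}

lemma integral_pow_mul_dot2 (hD : IsMoment μ Cb n D)
    (hint : ∀ (A : M2) (α β : Fin 2), Integrable (fun t => t ^ n * Cb t A α β) μ)
    (X Y : M2) : ∫ t, t ^ n * dot2 (Cb t X) Y ∂μ = dot2 (D X) Y := by
  simp_rw [← dot2_smul_left]
  exact integral_dot2 (f := fun t => t ^ n • Cb t X) (hint X) (hD X) Y

lemma isSymm {A : M2} (hD : IsMoment μ Cb n D) (hsymm : ∀ᵐ t ∂μ, (Cb t A).IsSymm) :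
    (D A).IsSymm := by
  ext α β
  rw [transpose_apply, hD, hD]
  refine integral_congr_ae (hsymm.mono fun t ht => ?_)
  simp only [ht.apply α β]

lemma dot2_comm (hD : IsMoment μ Cb n D)
    (hint : ∀ (A : M2) (α β : Fin 2), Integrable (fun t => t ^ n * Cb t A α β) μ)
    (hsa : ∀ᵐ t ∂μ, ∀ X Y : M2, X.IsSymm → Y.IsSymm → dot2 (Cb t X) Y = dot2 X (Cb t Y))
    {X Y : M2} (hX : X.IsSymm) (hY : Y.IsSymm) : dot2 (D X) Y = dot2 (D Y) X := by
  rw [← hD.integral_pow_mul_dot2 hint, ← hD.integral_pow_mul_dot2 hint]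
  refine integral_congr_ae (hsa.mono fun t ht => ?_)
  simp only [ht X Y hX hY, _root_.dot2_comm X]

lemma dot2_self_nonneg (hD : IsMoment μ Cb n D) (hn : Even n)
    (hint : ∀ (A : M2) (α β : Fin 2), Integrable (fun t => t ^ n * Cb t A α β) μ)
    {X : M2} (hpos : ∀ᵐ t ∂μ, 0 ≤ dot2 (Cb t X) X) : 0 ≤ dot2 (D X) X := by
  rw [← hD.integral_pow_mul_dot2 hint]
  exact integral_nonneg_of_ae (hpos.mono fun t ht => mul_nonneg (hn.pow_nonneg t) ht)

end IsMoment

lemma integral_dot2_add_smul {C₀ C₁ C₂ : M2 →ₗ[ℝ] M2} (hC₀ : IsMoment μ Cb 0 C₀)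
    (hC₁ : IsMoment μ Cb 1 C₁) (hC₂ : IsMoment μ Cb 2 C₂)
    (hint : ∀ (n : ℕ) (A : M2) (α β : Fin 2), Integrable (fun t => t ^ n * Cb t A α β) μ)
    (hsa : ∀ᵐ t ∂μ, ∀ X Y : M2, X.IsSymm → Y.IsSymm → dot2 (Cb t X) Y = dot2 X (Cb t Y))
    {A B : M2} (hA : A.IsSymm) (hB : B.IsSymm) :
    ∫ t, dot2 (Cb t (B + t • A)) (B + t • A) ∂μ
      = dot2 (C₀ B) B + 2 * dot2 (C₁ A) B + dot2 (C₂ A) A := by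
  -- the powers `t ^ 0`, `t ^ 1` are kept so that the terms match `IsMoment.integral_pow_mul_dot2`
  have hexpand : (fun t => dot2 (Cb t (B + t • A)) (B + t • A)) =ᵐ[μ]
      fun t => (t ^ 0 * dot2 (Cb t B) B + 2 * (t ^ 1 * dot2 (Cb t A) B))
        + t ^ 2 * dot2 (Cb t A) A := by
    filter_upwards [hsa] with t ht
    simp only [map_add, map_smul, dot2_add_left, dot2_add_right, dot2_smul_left,
      dot2_smul_right, ht B A hB hA, _root_.dot2_comm B]
    ring
  have hint' (n : ℕ) (X Y : M2) : Integrable (fun t => t ^ n * dot2 (Cb t X) Y) μ := by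
    simpa only [dot2_smul_left] using
      integrable_dot2 (f := fun t => t ^ n • Cb t X) (hint n X) Y
  have h₀₁ : Integrable (fun t => t ^ 0 * dot2 (Cb t B) B + 2 * (t ^ 1 * dot2 (Cb t A) B)) μ :=
    (hint' 0 B B).add ((hint' 1 A B).const_mul 2)
  rw [integral_congr_ae hexpand, integral_add h₀₁ (hint' 2 A A),
    integral_add (hint' 0 B B) ((hint' 1 A B).const_mul 2), integral_const_mul,
    hC₀.integral_pow_mul_dot2 (hint 0), hC₁.integral_pow_mul_dot2 (hint 1),
    hC₂.integral_pow_mul_dot2 (hint 2)]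

end Moments

theorem chat_quadForm_eq_twelve_min_general
    (Cb : ℝ → M2 →ₗ[ℝ] M2) (c : ℝ) (hc : 0 < c)
    (hmeas : ∀ (A : M2) (α β : Fin 2), Measurable fun t : ℝ => (Cb t A) α β)
    (hbd : ∃ K : ℝ, ∀ᵐ t ∂(volume.restrict Ioo2),
      ∀ (A : M2) (α β : Fin 2), |(Cb t A) α β| ≤ K * ∑ γ : Fin 2, ∑ δ : Fin 2, |A γ δ|)
    (hsymm : ∀ t ∈ Ioo2, ∀ A : M2, A.IsSymm → (Cb t A).IsSymm)
    (hsa : ∀ t ∈ Ioo2, ∀ A B : M2, A.IsSymm → B.IsSymm →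
      dot2 (Cb t A) B = dot2 A (Cb t B))
    (hcoer : ∀ᵐ t ∂(volume.restrict Ioo2), ∀ A : M2, A.IsSymm →
      c * dot2 A A ≤ dot2 (Cb t A) A)
    (C0 C1 C2 D0 : M2 →ₗ[ℝ] M2)
    (hC0 : ∀ (A : M2) (α β : Fin 2), (C0 A) α β = ∫ t in Ioo2, (Cb t A) α β)
    (hC1 : ∀ (A : M2) (α β : Fin 2), (C1 A) α β = ∫ t in Ioo2, t * (Cb t A) α β)
    (hC2 : ∀ (A : M2) (α β : Fin 2), (C2 A) α β = ∫ t in Ioo2, t ^ 2 * (Cb t A) α β)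
    (hD0symm : ∀ A : M2, A.IsSymm → (D0 A).IsSymm)
    (hD0r : ∀ A : M2, A.IsSymm → C0 (D0 A) = A)
    (Ab : M2) (hA : Ab.IsSymm) :
    ∃ m : ℝ,
      IsLeast {x : ℝ | ∃ B : M2, B.IsSymm ∧
          x = ∫ t in Ioo2, dot2 (Cb t (B + t • Ab)) (B + t • Ab)} m
      ∧ dot2 ((12:ℝ) • (C2 Ab - C1 (D0 (C1 Ab)))) Ab = 12 * m := by
  obtain ⟨K, hK⟩ := hbd
  have hIoo : ∀ᵐ t ∂(volume.restrict Ioo2), t ∈ Ioo2 := ae_restrict_mem measurableSet_Ioo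
  have : IsFiniteMeasure (volume.restrict Ioo2) :=
    isFiniteMeasure_restrict.2 measure_Ioo_lt_top.ne
  have hint := integrable_pow_mul_apply hmeas hK <| hIoo.mono fun t ht =>
    abs_le.2 ⟨by linarith [ht.1], by linarith [ht.2]⟩
  have hsa' := hIoo.mono hsa
  have hC0' : IsMoment (volume.restrict Ioo2) Cb 0 C0 := by simpa [IsMoment] using hC0
  have hC1' : IsMoment (volume.restrict Ioo2) Cb 1 C1 := by simpa [IsMoment] using hC1
  have hv : (C1 Ab).IsSymm := hC1'.isSymm (hIoo.mono fun t ht => hsymm t ht Ab hA)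
  have hmin := isLeast_quadratic_dot2 (fun X Y hX hY => hC0'.dot2_comm (hint 0) hsa' hX hY)
    (fun X hX => hC0'.dot2_self_nonneg .zero (hint 0) (hcoer.mono fun t ht =>
      (mul_nonneg hc.le (dot2_self_nonneg hX)).trans (ht X hX)))
    (hD0symm _ hv) (hD0r _ hv) (dot2 (C2 Ab) Ab)
  refine ⟨dot2 (C2 Ab) Ab - dot2 (C1 Ab) (D0 (C1 Ab)), ?_, ?_⟩
  · convert hmin using 3 with x
    refine exists_congr fun B => and_congr_right fun hB => ?_
    rw [integral_dot2_add_smul hC0' hC1' hC2 hint hsa' hA hB]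
  · rw [dot2_smul_left, dot2_sub_left, hC1'.dot2_comm (hint 1) hsa' (hD0symm _ hv) hA]

/-- Let `C̄ : (−1/2,1/2) → (self-adjoint maps Sym₂ → Sym₂)` be a
measurable, essentially bounded, uniformly coercive field, let `C̄⁽ⁱ⁾` (i = 0,1,2) be its
moments, `D₀` the inverse of `C̄⁽⁰⁾` on `Sym₂`, and
`Ĉ := 12(C̄⁽²⁾ − C̄⁽¹⁾(C̄⁽⁰⁾)⁻¹C̄⁽¹⁾)`.  Then for every symmetric `Ā`,
`ĈĀ·Ā = 12 · min_{B̄ ∈ Sym₂} ∫ C̄(t)(B̄ + tĀ)·(B̄ + tĀ) dt`. -/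
theorem chat_quadForm_eq_twelve_min
    (Cb : ℝ → M2 →ₗ[ℝ] M2) (c : ℝ) (hc : 0 < c)
    (hmeas : ∀ (A : M2) (α β : Fin 2), Measurable fun t : ℝ => (Cb t A) α β)
    (hbd : ∃ K : ℝ, ∀ᵐ t ∂(volume.restrict Ioo2),
      ∀ (A : M2) (α β : Fin 2), |(Cb t A) α β| ≤ K * ∑ γ : Fin 2, ∑ δ : Fin 2, |A γ δ|)
    (hsymm : ∀ t ∈ Ioo2, ∀ A : M2, A.IsSymm → (Cb t A).IsSymm)
    (hsa : ∀ t ∈ Ioo2, ∀ A B : M2, A.IsSymm → B.IsSymm →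
      dot2 (Cb t A) B = dot2 A (Cb t B))
    (hcoer : ∀ᵐ t ∂(volume.restrict Ioo2), ∀ A : M2, A.IsSymm →
      c * dot2 A A ≤ dot2 (Cb t A) A)
    (C0 C1 C2 D0 : M2 →ₗ[ℝ] M2)
    (hC0 : ∀ (A : M2) (α β : Fin 2), (C0 A) α β = ∫ t in Ioo2, (Cb t A) α β)
    (hC1 : ∀ (A : M2) (α β : Fin 2), (C1 A) α β = ∫ t in Ioo2, t * (Cb t A) α β)
    (hC2 : ∀ (A : M2) (α β : Fin 2), (C2 A) α β = ∫ t in Ioo2, t ^ 2 * (Cb t A) α β)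
    (hD0symm : ∀ A : M2, A.IsSymm → (D0 A).IsSymm)
    (hD0l : ∀ A : M2, A.IsSymm → D0 (C0 A) = A)
    (hD0r : ∀ A : M2, A.IsSymm → C0 (D0 A) = A)
    (Ab : M2) (hA : Ab.IsSymm) :
    ∃ m : ℝ,
      IsLeast {x : ℝ | ∃ B : M2, B.IsSymm ∧
          x = ∫ t in Ioo2, dot2 (Cb t (B + t • Ab)) (B + t • Ab)} m
      ∧ dot2 ((12:ℝ) • (C2 Ab - C1 (D0 (C1 Ab)))) Ab = 12 * m :=
  chat_quadForm_eq_twelve_min_general Cb c hc hmeas hbd hsymm hsa hcoer C0 C1 C2 D0 hC0 hC1 hC2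
    hD0symm hD0r Ab hA
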